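/- Let K^perf be the perfection of a local field K of characteristic p with residue field k, and for each integer i ≥ 0 let W_i(K^perf/O_{K^perf}) be the left R°-submodule of K^perf/O_{K^perf} generated by the classes [ξ_j] with p ∤ j and j < i (where ξ_j ∈ K has normalized valuation -j). Then W_i(K^perf/O_{K^perf}) equals the R°-submodule generated by the residue classes of all elements of K (not K^perf) of normalized valuation > -i. -/

import Mathlib

/-!
STATEMENT 8: With `K = k((t)) = LaurentSeries k` a local field of characteristic `p`,
`Kperf = PerfectClosure K p` its perfection, `O_{Kperf}` its valuation ring, and
`R° = k[τ^{±1}]` the twisted Laurent polynomial ring (acting via `ℤ`-powers of Frobenius):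
for every `i ≥ 0` the submodule `W_i(Kperf/O_{Kperf})`, defined as the left `R°`-span of the
classes `[ξ_j]` for `p ∤ j < i` (`ξ_j ∈ K` of normalized valuation `-j`), coincides with the
`R°`-span of the classes of *all* elements of `K` of normalized valuation `> -i`.
Membership of `[m]` in the span of a set of classes is expressed by: `m` differs from a finite
twisted-Laurent-polynomial combination of elements of the set by an element of `O_{Kperf}`.
-/

noncomputable section

variable (p : ℕ) [Fact p.Prime] (k : Type) [Field k] [Fintype k] [CharP k p]

instance : CharP (LaurentSeries k) p :=
  charP_of_injective_ringHom (HahnSeries.C_injective (Γ := ℤ) (R := k)) p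

abbrev Kperf := PerfectClosure (LaurentSeries k) p

abbrev ιK : LaurentSeries k →+* Kperf p k := PerfectClosure.of (LaurentSeries k) p

/-- The valuation ring of the perfection. -/
def Operf : Set (Kperf p k) :=
  {ξ | ∀ (m : ℕ) (z : LaurentSeries k), ξ ^ (p ^ m) = ιK p k z → 0 ≤ z.orderTop}

/-- Action of a twisted Laurent polynomial on the perfection. -/
def twistedLaurentAct (q : LaurentPolynomial k) (ξ : Kperf p k) : Kperf p k :=
  Finsupp.sum q.coeff fun i a => ιK p k (HahnSeries.C a) * ((frobeniusEquiv (Kperf p k) p ^ i) ξ)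

/-- `[m]` lies in the left `R°`-submodule of `Kperf/O_{Kperf}` generated by the classes of the
elements of `S`. -/
def InTwistedSpan (S : Set (Kperf p k)) (m : Kperf p k) : Prop :=
  ∃ (t : Finset (Kperf p k)) (c : Kperf p k → LaurentPolynomial k),
    ↑t ⊆ S ∧ (m - ∑ ξ ∈ t, twistedLaurentAct p k (c ξ) ξ) ∈ Operf p k


end

/-! Every `z ∈ K` with `v z > -i` is reduced into `O` modulo the span by removing its lowest
coefficient below `t ^ 0`, at `t ^ (-j)` say, and inducting on `j`. If `p ∤ j`, subtract a
constant multiple of `ξ j`. If `j = p * j'`, the monomial `a t ^ (-j)` is the `p`-th power of a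
monomial of valuation `-j'`, which lies in the span by induction, and the span is stable under
Frobenius. Stability of `InTwistedSpan` under `R°` rests on `τ ^ n * c = σ ^ n (c) * τ ^ n` for
`c ∈ k`, which needs `k` to be perfect. -/

theorem HahnSeries.zero_le_orderTop_pow_iff {Γ R : Type*} [AddCommMonoid Γ] [LinearOrder Γ]
    [IsOrderedCancelAddMonoid Γ] [Semiring R] [NoZeroDivisors R] (x : HahnSeries Γ R) {n : ℕ}
    (hn : n ≠ 0) : 0 ≤ (x ^ n).orderTop ↔ 0 ≤ x.orderTop := by
  rw [zero_le_orderTop_iff, zero_le_orderTop_iff, order_pow, nsmul_nonneg_iff hn]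

theorem HahnSeries.add_one_le_orderTop_sub {R : Type*} [AddGroup R] {x y : HahnSeries ℤ R} {g : ℤ}
    (hx : (g : WithTop ℤ) ≤ x.orderTop) (hy : (g : WithTop ℤ) ≤ y.orderTop)
    (hxy : x.coeff g = y.coeff g) : ((g + 1 : ℤ) : WithTop ℤ) ≤ (x - y).orderTop := by
  rw [le_orderTop_iff_forall] at hx hy ⊢
  intro g' hg'
  rw [coeff_sub, sub_eq_zero]
  rcases (Int.lt_add_one_iff.mp (WithTop.coe_lt_coe.mp hg')).lt_or_eq with hlt | rfl
  · rw [hx g' (WithTop.coe_lt_coe.mpr hlt), hy g' (WithTop.coe_lt_coe.mpr hlt)]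
  · exact hxy

section PerfectRing

variable {p : ℕ} {R S : Type*} [CommSemiring R] [CommSemiring S] [ExpChar R p] [PerfectRing R p]
  [ExpChar S p] [PerfectRing S p]

theorem frobeniusEquiv_zpow_natCast_apply (n : ℕ) (x : R) :
    (frobeniusEquiv R p ^ (n : ℤ)) x = x ^ p ^ n := by
  rw [zpow_natCast, ← iterateFrobeniusEquiv_eq_pow, iterateFrobeniusEquiv_def]

theorem frobeniusEquiv_zpow_apply_pow (a : ℤ) (m : ℕ) (x : R) :
    ((frobeniusEquiv R p ^ a) x) ^ p ^ m = (frobeniusEquiv R p ^ (a + m)) x := by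
  rw [← frobeniusEquiv_zpow_natCast_apply, ← RingAut.mul_apply, ← zpow_add, add_comm]

theorem RingHom.map_frobeniusEquiv_zpow_apply (f : R →+* S) (n : ℤ) (x : R) :
    f ((frobeniusEquiv R p ^ n) x) = (frobeniusEquiv S p ^ n) (f x) := by
  induction n using Int.induction_on generalizing x with
  | zero => rfl
  | succ n ih =>
    rw [zpow_add_one, zpow_add_one, RingAut.mul_apply, RingAut.mul_apply, ih,
      frobeniusEquiv_def, frobeniusEquiv_def, map_pow]
  | pred n ih =>
    rw [zpow_sub_one, zpow_sub_one, RingAut.mul_apply, RingAut.mul_apply, ih, RingAut.inv_apply,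
      RingAut.inv_apply, f.map_frobeniusEquiv_symm p]

end PerfectRing

section Perfection

variable {p : ℕ} [Fact p.Prime] {k : Type} [Field k] [CharP k p]

theorem exists_pow_eq_ιK (x : Kperf p k) :
    ∃ (m : ℕ) (z : LaurentSeries k), x ^ p ^ m = ιK p k z := by
  obtain ⟨m, z, h⟩ := IsPRadical.pow_mem (ιK p k) p x
  exact ⟨m, z, h.symm⟩

theorem pow_add_eq_ιK_pow {x : Kperf p k} {m : ℕ} {z : LaurentSeries k}
    (h : x ^ p ^ m = ιK p k z) (n : ℕ) : x ^ p ^ (m + n) = ιK p k (z ^ p ^ n) := by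
  rw [pow_add, pow_mul, h, map_pow]

theorem exists_pow_eq_ιK_pair (x y : Kperf p k) :
    ∃ (m : ℕ) (z w : LaurentSeries k), x ^ p ^ m = ιK p k z ∧ y ^ p ^ m = ιK p k w := by
  obtain ⟨m, z, hz⟩ := exists_pow_eq_ιK x
  obtain ⟨n, w, hw⟩ := exists_pow_eq_ιK y
  exact ⟨m + n, _, _, pow_add_eq_ιK_pow hz n, add_comm n m ▸ pow_add_eq_ιK_pow hw m⟩

theorem mem_Operf_iff {x : Kperf p k} :
    x ∈ Operf p k ↔ ∃ (m : ℕ) (z : LaurentSeries k), x ^ p ^ m = ιK p k z ∧ 0 ≤ z.orderTop := by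
  refine ⟨fun hx => ?_, fun ⟨m, z, hz, h0⟩ n w hw => ?_⟩
  · obtain ⟨m, z, hz⟩ := exists_pow_eq_ιK x
    exact ⟨m, z, hz, hx m z hz⟩
  · have hp : p ≠ 0 := (Fact.out : p.Prime).ne_zero
    have hzw : z ^ p ^ n = w ^ p ^ m := (ιK p k).injective <| by
      rw [← pow_add_eq_ιK_pow hz, ← pow_add_eq_ιK_pow hw, add_comm]
    rwa [← w.zero_le_orderTop_pow_iff (pow_ne_zero m hp), ← hzw,
      z.zero_le_orderTop_pow_iff (pow_ne_zero n hp)]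

theorem ιK_mem_Operf {z : LaurentSeries k} (hz : 0 ≤ z.orderTop) : ιK p k z ∈ Operf p k :=
  mem_Operf_iff.mpr ⟨0, z, by simp, hz⟩

theorem zero_mem_Operf : (0 : Kperf p k) ∈ Operf p k :=
  map_zero (ιK p k) ▸ ιK_mem_Operf (by simp)

theorem add_mem_Operf {x y : Kperf p k} (hx : x ∈ Operf p k) (hy : y ∈ Operf p k) :
    x + y ∈ Operf p k := by
  obtain ⟨m, z, w, hz, hw⟩ := exists_pow_eq_ιK_pair x y
  refine mem_Operf_iff.mpr ⟨m, z + w, by rw [add_pow_char_pow, hz, hw, map_add], ?_⟩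
  exact (le_min (hx m z hz) (hy m w hw)).trans HahnSeries.min_orderTop_le_orderTop_add

theorem mul_mem_Operf {x y : Kperf p k} (hx : x ∈ Operf p k) (hy : y ∈ Operf p k) :
    x * y ∈ Operf p k := by
  obtain ⟨m, z, w, hz, hw⟩ := exists_pow_eq_ιK_pair x y
  refine mem_Operf_iff.mpr ⟨m, z * w, by rw [mul_pow, hz, hw, map_mul], ?_⟩
  rw [HahnSeries.orderTop_mul]
  exact add_nonneg (hx m z hz) (hy m w hw)

theorem frobeniusEquiv_zpow_mem_Operf (n : ℤ) {x : Kperf p k} (hx : x ∈ Operf p k) :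
    (frobeniusEquiv (Kperf p k) p ^ n) x ∈ Operf p k := by
  obtain ⟨m, z, hz⟩ := exists_pow_eq_ιK x
  have hp : p ≠ 0 := (Fact.out : p.Prime).ne_zero
  refine mem_Operf_iff.mpr ⟨m + (-n).toNat, z ^ p ^ n.toNat, ?_,
    (z.zero_le_orderTop_pow_iff (pow_ne_zero _ hp)).mpr (hx m z hz)⟩
  rw [frobeniusEquiv_zpow_apply_pow, show n + ((m + (-n).toNat : ℕ) : ℤ) = ((m + n.toNat : ℕ) : ℤ)
    by omega, frobeniusEquiv_zpow_natCast_apply, pow_add_eq_ιK_pow hz]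

end Perfection

section TwistedAction

variable {p : ℕ} [Fact p.Prime] {k : Type} [Field k] [CharP k p]

open AddMonoidAlgebra

theorem twistedLaurentAct_single (n : ℤ) (a : k) (x : Kperf p k) :
    twistedLaurentAct p k (single n a) x
      = ιK p k (HahnSeries.C a) * (frobeniusEquiv (Kperf p k) p ^ n) x :=
  Finsupp.sum_single_index (by simp)

theorem twistedLaurentAct_zero_left (x : Kperf p k) : twistedLaurentAct p k 0 x = 0 :=
  Finsupp.sum_zero_index

theorem twistedLaurentAct_add_left (q r : LaurentPolynomial k) (x : Kperf p k) :
    twistedLaurentAct p k (q + r) x = twistedLaurentAct p k q x + twistedLaurentAct p k r x :=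
  Finsupp.sum_add_index' (by simp) (by simp [add_mul])

theorem twistedLaurentAct_eq_sum_single (q : LaurentPolynomial k) (x : Kperf p k) :
    twistedLaurentAct p k q x = q.coeff.sum fun n a => twistedLaurentAct p k (single n a) x := by
  simp only [twistedLaurentAct_single]
  rfl

theorem twistedLaurentAct_add_right (q : LaurentPolynomial k) (x y : Kperf p k) :
    twistedLaurentAct p k q (x + y) = twistedLaurentAct p k q x + twistedLaurentAct p k q y := by
  simp only [twistedLaurentAct, map_add, mul_add, Finsupp.sum_add]

theorem twistedLaurentAct_sum_right {ι : Type*} (q : LaurentPolynomial k) (s : Finset ι)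
    (f : ι → Kperf p k) :
    twistedLaurentAct p k q (∑ i ∈ s, f i) = ∑ i ∈ s, twistedLaurentAct p k q (f i) :=
  map_sum (AddMonoidHom.mk' _ (twistedLaurentAct_add_right q)) f s

theorem twistedLaurentAct_single_single [PerfectRing k p] (m n : ℤ) (a b : k) (x : Kperf p k) :
    twistedLaurentAct p k (single m a) (twistedLaurentAct p k (single n b) x)
      = twistedLaurentAct p k (single (m + n) (a * (frobeniusEquiv k p ^ m) b)) x := by
  have hC := ((ιK p k).comp HahnSeries.C).map_frobeniusEquiv_zpow_apply (p := p) m b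
  simp only [RingHom.comp_apply] at hC
  simp only [twistedLaurentAct_single, map_mul, hC, zpow_add, RingAut.mul_apply, mul_assoc]

theorem twistedLaurentAct_single_mem_Operf (n : ℤ) (a : k) {x : Kperf p k}
    (hx : x ∈ Operf p k) : twistedLaurentAct p k (single n a) x ∈ Operf p k := by
  rw [twistedLaurentAct_single]
  refine mul_mem_Operf (ιK_mem_Operf ?_) (frobeniusEquiv_zpow_mem_Operf n hx)
  rw [HahnSeries.C_apply]
  exact HahnSeries.orderTop_single_le

end TwistedAction

namespace InTwistedSpan

variable {p : ℕ} [Fact p.Prime] {k : Type} [Field k] [CharP k p] {S T : Set (Kperf p k)}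
  {m m' : Kperf p k}

open AddMonoidAlgebra

theorem of_mem_Operf (h : m ∈ Operf p k) : InTwistedSpan p k S m :=
  ⟨∅, fun _ => 0, by simp, by simpa using h⟩

theorem act_of_mem (hm : m ∈ S) (q : LaurentPolynomial k) :
    InTwistedSpan p k S (twistedLaurentAct p k q m) :=
  ⟨{m}, fun _ => q, by simpa, by simpa using zero_mem_Operf⟩

theorem mono (hST : S ⊆ T) (h : InTwistedSpan p k S m) : InTwistedSpan p k T m :=
  let ⟨t, c, htS, hm⟩ := h
  ⟨t, c, htS.trans hST, hm⟩

theorem add (h : InTwistedSpan p k S m) (h' : InTwistedSpan p k S m') :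
    InTwistedSpan p k S (m + m') := by
  classical
  obtain ⟨t, c, htS, hm⟩ := h
  obtain ⟨t', c', htS', hm'⟩ := h'
  refine ⟨t ∪ t', fun ξ => (if ξ ∈ t then c ξ else 0) + (if ξ ∈ t' then c' ξ else 0),
    by simpa using ⟨htS, htS'⟩, ?_⟩
  have hsum (u : Finset (Kperf p k)) (d : Kperf p k → LaurentPolynomial k) (hu : u ⊆ t ∪ t') :
      ∑ ξ ∈ t ∪ t', twistedLaurentAct p k (if ξ ∈ u then d ξ else 0) ξ
        = ∑ ξ ∈ u, twistedLaurentAct p k (d ξ) ξ := by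
    simp only [apply_ite (twistedLaurentAct p k), ite_apply, twistedLaurentAct_zero_left]
    rw [Finset.sum_ite_mem, Finset.inter_eq_right.mpr hu]
  simp only [twistedLaurentAct_add_left, Finset.sum_add_distrib, hsum t c Finset.subset_union_left,
    hsum t' c' Finset.subset_union_right]
  convert add_mem_Operf hm hm' using 1
  abel

theorem sum {ι : Type*} (s : Finset ι) (f : ι → Kperf p k)
    (h : ∀ i ∈ s, InTwistedSpan p k S (f i)) : InTwistedSpan p k S (∑ i ∈ s, f i) :=
  Finset.sum_induction f _ (fun _ _ => add) (of_mem_Operf zero_mem_Operf) h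

variable [PerfectRing k p]

theorem act_single (h : InTwistedSpan p k S m) (n : ℤ) (a : k) :
    InTwistedSpan p k S (twistedLaurentAct p k (single n a) m) := by
  obtain ⟨t, c, htS, hm⟩ := h
  rw [← sub_add_cancel m (∑ ξ ∈ t, twistedLaurentAct p k (c ξ) ξ), twistedLaurentAct_add_right,
    twistedLaurentAct_sum_right]
  refine (of_mem_Operf (twistedLaurentAct_single_mem_Operf n a hm)).add (sum _ _ fun ξ hξ => ?_)
  rw [twistedLaurentAct_eq_sum_single (c ξ), Finsupp.sum, twistedLaurentAct_sum_right]
  refine sum _ _ fun i _ => ?_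
  rw [twistedLaurentAct_single_single]
  exact act_of_mem (htS hξ) _

theorem act (h : InTwistedSpan p k S m) (q : LaurentPolynomial k) :
    InTwistedSpan p k S (twistedLaurentAct p k q m) := by
  rw [twistedLaurentAct_eq_sum_single]
  exact sum _ _ fun n _ => h.act_single n _

theorem pow_p (h : InTwistedSpan p k S m) : InTwistedSpan p k S (m ^ p) := by
  have := h.act_single 1 1
  rwa [twistedLaurentAct_single, zpow_one, frobeniusEquiv_def, map_one, map_one, one_mul] at this

theorem trans (hT : ∀ x ∈ T, InTwistedSpan p k S x) (h : InTwistedSpan p k T m) :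
    InTwistedSpan p k S m := by
  obtain ⟨t, c, htT, hm⟩ := h
  rw [← sub_add_cancel m (∑ ξ ∈ t, twistedLaurentAct p k (c ξ) ξ)]
  exact (of_mem_Operf hm).add (sum _ _ fun ξ hξ => (hT ξ (htT hξ)).act (c ξ))

end InTwistedSpan

section Approximation

variable {p : ℕ} [Fact p.Prime] {k : Type} [Field k] [CharP k p] {S : Set (Kperf p k)}

theorem exists_inTwistedSpan_coeff_eq {x : LaurentSeries k} {g : ℤ} (hx : x.orderTop = g)
    (hxS : ιK p k x ∈ S) (a : k) :
    ∃ y : LaurentSeries k, (g : WithTop ℤ) ≤ y.orderTop ∧ y.coeff g = a ∧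
      InTwistedSpan p k S (ιK p k y) := by
  have hx0 : x.coeff g ≠ 0 := HahnSeries.coeff_orderTop_ne hx
  refine ⟨HahnSeries.C (a * (x.coeff g)⁻¹) * x, ?_, ?_, ?_⟩
  · rw [HahnSeries.orderTop_mul, ← hx]
    exact le_add_of_nonneg_left (by rw [HahnSeries.C_apply]; exact HahnSeries.orderTop_single_le)
  · rw [HahnSeries.C_mul_eq_smul, HahnSeries.coeff_smul, smul_eq_mul, inv_mul_cancel_right₀ hx0]
  · have := InTwistedSpan.act_of_mem hxS (AddMonoidAlgebra.single 0 (a * (x.coeff g)⁻¹))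
    rwa [twistedLaurentAct_single, zpow_zero, RingAut.one_apply, ← map_mul] at this

theorem InTwistedSpan.ιK_single_mul_p [PerfectRing k p] {g : ℤ} {a : k}
    (h : InTwistedSpan p k S (ιK p k (HahnSeries.single g ((frobeniusEquiv k p).symm a)))) :
    InTwistedSpan p k S (ιK p k (HahnSeries.single (p * g) a)) := by
  have := h.pow_p
  rwa [← map_pow, HahnSeries.single_pow, frobeniusEquiv_symm_pow_p, nsmul_eq_mul] at this

theorem InTwistedSpan.ιK_of_neg_le_orderTop [PerfectRing k p] {ξ : ℕ → LaurentSeries k}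
    (hξ : ∀ j, 0 < j → ¬ p ∣ j → (ξ j).orderTop = ((-(j : ℤ) : ℤ) : WithTop ℤ)) {i : ℕ}
    (hS : ∀ j, 0 < j → j < i → ¬ p ∣ j → ιK p k (ξ j) ∈ S) :
    ∀ j < i, ∀ z : LaurentSeries k, ((-(j : ℤ) : ℤ) : WithTop ℤ) ≤ z.orderTop →
      InTwistedSpan p k S (ιK p k z) := by
  intro j
  induction j using Nat.strong_induction_on with | _ j IH => ?_
  intro hji z hz
  rcases Nat.eq_zero_or_pos j with rfl | hj
  · exact InTwistedSpan.of_mem_Operf (ιK_mem_Operf (by simpa using hz))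
  obtain ⟨y, hy, hyz, hy_span⟩ : ∃ y : LaurentSeries k, ((-(j : ℤ) : ℤ) : WithTop ℤ) ≤ y.orderTop ∧
      y.coeff (-(j : ℤ)) = z.coeff (-(j : ℤ)) ∧ InTwistedSpan p k S (ιK p k y) := by
    by_cases hp : p ∣ j
    · obtain ⟨j', rfl⟩ := hp
      have hj' : j' < p * j' :=
        lt_mul_left (Nat.pos_of_mul_pos_left hj) (Fact.out : p.Prime).one_lt
      rw [show -((p * j' : ℕ) : ℤ) = p * -(j' : ℤ) by push_cast; ring]
      exact ⟨HahnSeries.single _ (z.coeff _), HahnSeries.orderTop_single_le,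
        HahnSeries.coeff_single_same _ _,
        (IH j' hj' (hj'.trans hji) _ HahnSeries.orderTop_single_le).ιK_single_mul_p⟩
    · exact exists_inTwistedSpan_coeff_eq (hξ j hj hp) (hS j hj hji hp) _
  have hzy := IH (j - 1) (by omega) (by omega) (z - y) <| by
    have := HahnSeries.add_one_le_orderTop_sub hz hy hyz.symm
    rwa [show -(j : ℤ) + 1 = -((j - 1 : ℕ) : ℤ) by omega] at this
  simpa using hzy.add hy_span

theorem InTwistedSpan.ιK_of_neg_lt_orderTop [PerfectRing k p] {ξ : ℕ → LaurentSeries k}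
    (hξ : ∀ j, 0 < j → ¬ p ∣ j → (ξ j).orderTop = ((-(j : ℤ) : ℤ) : WithTop ℤ)) {i : ℕ}
    (hS : ∀ j, 0 < j → j < i → ¬ p ∣ j → ιK p k (ξ j) ∈ S) {z : LaurentSeries k}
    (hz : ((-(i : ℤ) : ℤ) : WithTop ℤ) < z.orderTop) : InTwistedSpan p k S (ιK p k z) := by
  rcases Nat.eq_zero_or_pos i with rfl | hi
  · exact InTwistedSpan.of_mem_Operf (ιK_mem_Operf (by simpa using hz.le))
  refine InTwistedSpan.ιK_of_neg_le_orderTop hξ hS (i - 1) (by omega) z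
    (HahnSeries.le_orderTop_iff_forall.mpr fun g hg => HahnSeries.coeff_eq_zero_of_lt_orderTop ?_)
  have hg' : g ≤ -(i : ℤ) := by have := WithTop.coe_lt_coe.mp hg; omega
  exact (WithTop.coe_le_coe.mpr hg').trans_lt hz

end Approximation

section

variable (p : ℕ) [Fact p.Prime] (k : Type) [Field k] [Fintype k] [CharP k p]

theorem wFiltration_generated_by_small_valuation
    (ξ : ℕ → LaurentSeries k)
    (hξ : ∀ j, 0 < j → ¬ p ∣ j → (ξ j).orderTop = ((-(j : ℤ) : ℤ) : WithTop ℤ))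
    (i : ℕ) (m : Kperf p k) :
    InTwistedSpan p k
        {x | ∃ j : ℕ, 0 < j ∧ j < i ∧ ¬ p ∣ j ∧ x = ιK p k (ξ j)} m ↔
      InTwistedSpan p k
        {x | ∃ z : LaurentSeries k,
          ((-(i : ℤ) : ℤ) : WithTop ℤ) < z.orderTop ∧ x = ιK p k z} m := by
  constructor
  · refine InTwistedSpan.mono ?_
    rintro _ ⟨j, hj, hji, hjp, rfl⟩
    exact ⟨ξ j, by rw [hξ j hj hjp]; exact_mod_cast (by omega : -(i : ℤ) < -(j : ℤ)), rfl⟩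
  · refine InTwistedSpan.trans ?_
    rintro _ ⟨z, hz, rfl⟩
    refine InTwistedSpan.ιK_of_neg_lt_orderTop hξ ?_ hz
    exact fun j hj hji hjp => ⟨j, hj, hji, hjp, rfl⟩

end
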